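/- If h1 and h2 are rank functions on subsets of a finite index set N that are each the entropy function of some quasi-uniform family of random variables indexed by N, then their pointwise sum h1 + h2 is also the entropy function of a quasi-uniform family of random variables indexed by N. -/

import Mathlib

open scoped Classical BigOperators

/-- Probability of the event `X = a` under the mass function `p`. -/
noncomputable def dist {Ω : Type*} [Fintype Ω] (p : Ω → ℝ) {A : Type*} (X : Ω → A) (a : A) : ℝ :=
  ∑ ω ∈ Finset.univ.filter (fun ω => X ω = a), p ω

/-- The (finite) support of a random variable. -/
noncomputable def supp {Ω : Type*} [Fintype Ω] (p : Ω → ℝ) {A : Type*} (X : Ω → A) : Finset A :=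
  (Finset.univ.image X).filter (fun a => 0 < dist p X a)

/-- Shannon entropy (in bits) of a random variable. -/
noncomputable def entH {Ω : Type*} [Fintype Ω] (p : Ω → ℝ) {A : Type*} (X : Ω → A) : ℝ :=
  -∑ a ∈ Finset.univ.image X, dist p X a * Real.logb 2 (dist p X a)

/-- `p` is a probability mass function. -/
def IsProb {Ω : Type*} [Fintype Ω] (p : Ω → ℝ) : Prop :=
  (∀ ω, 0 ≤ p ω) ∧ ∑ ω, p ω = 1

/-- `X` is uniformly distributed over its support. -/
def UniformOnSupport {Ω : Type*} [Fintype Ω] (p : Ω → ℝ) {A : Type*} (X : Ω → A) : Prop :=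
  ∀ a ∈ supp p X, dist p X a = ((supp p X).card : ℝ)⁻¹

/-- The tuple `(X_i : i ∈ α)` as a single random variable. -/
noncomputable def tupleOn {Ω N A : Type*} (X : N → Ω → A) (α : Finset N) (ω : Ω) :
    {i // i ∈ α} → A := fun i => X i.1 ω

/-- A family of random variables is quasi-uniform if every sub-tuple is
uniformly distributed over its support. -/
def QuasiUniformFamily {Ω : Type*} [Fintype Ω] {N A : Type*} (p : Ω → ℝ) (X : N → Ω → A) : Prop :=
  ∀ α : Finset N, UniformOnSupport p (tupleOn X α)

/-- The entropy function of a family of random variables. -/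
noncomputable def entFn {Ω : Type*} [Fintype Ω] {N A : Type*} (p : Ω → ℝ) (X : N → Ω → A)
    (α : Finset N) : ℝ := entH p (tupleOn X α)

/-! Take independent copies: on `Ω₁ × Ω₂` with the product mass, the tuple of the paired family
`i ↦ (X₁ i, X₂ i)` over `α` is an injective relabeling of the independent pair of tuples
`(X₁_α, X₂_α)`. The law of that pair factorizes, so its support is the product of the two supports,
on which it is uniform with mass `1 / (|S₁| |S₂|)`, and its entropy is the sum of the two entropies.
Transporting the sample space to `Fin n` makes it live in `Type`. -/

open Finset

section RandomVariable

variable {Ω A B : Type*} [Fintype Ω] {p : Ω → ℝ}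

lemma dist_nonneg_of_isProb (hp : IsProb p) (X : Ω → A) (a : A) : 0 ≤ dist p X a :=
  sum_nonneg fun ω _ => hp.1 ω

lemma mem_supp_iff (X : Ω → A) (a : A) : a ∈ supp p X ↔ 0 < dist p X a := by
  refine ⟨fun h => (mem_filter.1 h).2, fun h => mem_filter.2 ⟨?_, h⟩⟩
  by_contra ha
  refine h.ne' (sum_eq_zero fun ω hω => absurd ?_ ha)
  exact mem_image.2 ⟨ω, mem_univ ω, (mem_filter.1 hω).2⟩

lemma sum_dist (hp : IsProb p) (X : Ω → A) : ∑ a ∈ univ.image X, dist p X a = 1 := by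
  unfold _root_.dist
  rw [sum_fiberwise_of_maps_to fun ω _ => mem_image_of_mem X (mem_univ ω), hp.2]

lemma dist_comp_injective {f : A → B} (hf : f.Injective) (X : Ω → A) (a : A) :
    dist p (f ∘ X) (f a) = dist p X a := by
  unfold _root_.dist
  simp only [Function.comp_apply, hf.eq_iff]

lemma supp_comp_injective {f : A → B} (hf : f.Injective) (X : Ω → A) :
    supp p (f ∘ X) = (supp p X).image f := by
  rw [supp, supp, ← image_image, filter_image]
  exact congrArg (image f) (filter_congr fun a _ => by rw [dist_comp_injective hf])

lemma entH_comp_injective {f : A → B} (hf : f.Injective) (X : Ω → A) :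
    entH p (f ∘ X) = entH p X := by
  rw [entH, entH, ← image_image, sum_image fun a _ b _ h => hf h]
  simp only [dist_comp_injective hf]

lemma UniformOnSupport.comp_injective {X : Ω → A} (hu : UniformOnSupport p X) {f : A → B}
    (hf : f.Injective) : UniformOnSupport p (f ∘ X) := by
  intro b hb
  rw [supp_comp_injective hf] at hb ⊢
  obtain ⟨a, ha, rfl⟩ := mem_image.1 hb
  rw [dist_comp_injective hf, card_image_of_injective _ hf, hu a ha]

end RandomVariable

section SampleSpace

variable {Ω Ω' A : Type*} [Fintype Ω] [Fintype Ω'] (e : Ω' ≃ Ω) (p : Ω → ℝ) (X : Ω → A)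

lemma dist_comp_equiv (a : A) : dist (p ∘ e) (X ∘ e) a = dist p X a :=
  sum_equiv e (by simp) (by simp)

lemma image_univ_comp_equiv : univ.image (X ∘ e) = univ.image X := by
  rw [← image_image, image_univ_equiv]

lemma supp_comp_equiv : supp (p ∘ e) (X ∘ e) = supp p X := by
  simp only [supp, image_univ_comp_equiv, dist_comp_equiv]

lemma entH_comp_equiv : entH (p ∘ e) (X ∘ e) = entH p X := by
  simp only [entH, image_univ_comp_equiv, dist_comp_equiv]

lemma uniformOnSupport_comp_equiv : UniformOnSupport (p ∘ e) (X ∘ e) ↔ UniformOnSupport p X := by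
  simp only [UniformOnSupport, supp_comp_equiv, dist_comp_equiv]

variable {p}

lemma IsProb.comp_equiv (hp : IsProb p) : IsProb (p ∘ e) :=
  ⟨fun ω => hp.1 (e ω), by rw [← hp.2]; exact e.sum_comp p⟩

variable {N : Type*}

lemma QuasiUniformFamily.comp_equiv {X : N → Ω → A} (hq : QuasiUniformFamily p X) :
    QuasiUniformFamily (p ∘ e) (fun i => X i ∘ e) :=
  fun α => (uniformOnSupport_comp_equiv e p (tupleOn X α)).2 (hq α)

lemma entFn_comp_equiv (X : N → Ω → A) (α : Finset N) :
    entFn (p ∘ e) (fun i => X i ∘ e) α = entFn p X α :=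
  entH_comp_equiv e p (tupleOn X α)

end SampleSpace

section Product

variable {Ω₁ Ω₂ A₁ A₂ N : Type*}

def prodMass (p₁ : Ω₁ → ℝ) (p₂ : Ω₂ → ℝ) (ω : Ω₁ × Ω₂) : ℝ := p₁ ω.1 * p₂ ω.2

lemma tupleOn_prodMap (X₁ : N → Ω₁ → A₁) (X₂ : N → Ω₂ → A₂) (α : Finset N) :
    tupleOn (fun i => Prod.map (X₁ i) (X₂ i)) α =
      (Equiv.arrowProdEquivProdArrow _ _ _).symm ∘ Prod.map (tupleOn X₁ α) (tupleOn X₂ α) :=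
  rfl

variable [Fintype Ω₁] [Fintype Ω₂] {p₁ : Ω₁ → ℝ} {p₂ : Ω₂ → ℝ}

lemma IsProb.prod (hp₁ : IsProb p₁) (hp₂ : IsProb p₂) : IsProb (prodMass p₁ p₂) :=
  ⟨fun ω => mul_nonneg (hp₁.1 ω.1) (hp₂.1 ω.2), by
    simp only [prodMass, Fintype.sum_prod_type, ← mul_sum, hp₂.2, mul_one, hp₁.2]⟩

lemma dist_prodMass (Y₁ : Ω₁ → A₁) (Y₂ : Ω₂ → A₂) (a : A₁ × A₂) :
    dist (prodMass p₁ p₂) (Prod.map Y₁ Y₂) a = dist p₁ Y₁ a.1 * dist p₂ Y₂ a.2 := by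
  unfold _root_.dist
  rw [sum_mul_sum, ← sum_product']
  refine sum_congr ?_ fun _ _ => rfl
  ext ω
  simp [Prod.ext_iff]

lemma supp_prodMass (hp₁ : IsProb p₁) (hp₂ : IsProb p₂) (Y₁ : Ω₁ → A₁) (Y₂ : Ω₂ → A₂) :
    supp (prodMass p₁ p₂) (Prod.map Y₁ Y₂) = supp p₁ Y₁ ×ˢ supp p₂ Y₂ := by
  ext a
  have hd₁ := dist_nonneg_of_isProb hp₁ Y₁ a.1
  have hd₂ := dist_nonneg_of_isProb hp₂ Y₂ a.2
  rw [mem_product, mem_supp_iff, mem_supp_iff, mem_supp_iff, dist_prodMass,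
    (mul_nonneg hd₁ hd₂).lt_iff_ne', hd₁.lt_iff_ne', hd₂.lt_iff_ne', mul_ne_zero_iff]

lemma UniformOnSupport.prodMass (hp₁ : IsProb p₁) (hp₂ : IsProb p₂) {Y₁ : Ω₁ → A₁} {Y₂ : Ω₂ → A₂}
    (hu₁ : UniformOnSupport p₁ Y₁) (hu₂ : UniformOnSupport p₂ Y₂) :
    UniformOnSupport (prodMass p₁ p₂) (Prod.map Y₁ Y₂) := by
  intro a ha
  rw [supp_prodMass hp₁ hp₂] at ha ⊢
  rw [mem_product] at ha
  rw [dist_prodMass, hu₁ _ ha.1, hu₂ _ ha.2, card_product, Nat.cast_mul, mul_inv]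

lemma mul_mul_logb_mul (b x y : ℝ) :
    x * y * Real.logb b (x * y) = y * (x * Real.logb b x) + x * (y * Real.logb b y) := by
  rcases eq_or_ne x 0 with rfl | hx
  · simp
  rcases eq_or_ne y 0 with rfl | hy
  · simp
  rw [Real.logb_mul hx hy]
  ring

lemma entH_prodMass (hp₁ : IsProb p₁) (hp₂ : IsProb p₂) (Y₁ : Ω₁ → A₁) (Y₂ : Ω₂ → A₂) :
    entH (prodMass p₁ p₂) (Prod.map Y₁ Y₂) = entH p₁ Y₁ + entH p₂ Y₂ := by
  rw [entH, entH, entH, sum_congr (s₂ := univ.image Y₁ ×ˢ univ.image Y₂) ?_ fun _ _ => rfl,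
    sum_product]
  · simp only [dist_prodMass, mul_mul_logb_mul, sum_add_distrib, ← sum_mul, ← mul_sum,
      sum_dist hp₁, sum_dist hp₂]
    ring
  · ext a
    simp [Prod.ext_iff]

lemma QuasiUniformFamily.prodMass (hp₁ : IsProb p₁) (hp₂ : IsProb p₂) {X₁ : N → Ω₁ → A₁}
    {X₂ : N → Ω₂ → A₂} (hq₁ : QuasiUniformFamily p₁ X₁) (hq₂ : QuasiUniformFamily p₂ X₂) :
    QuasiUniformFamily (prodMass p₁ p₂) (fun i => Prod.map (X₁ i) (X₂ i)) := fun α => by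
  rw [tupleOn_prodMap]
  exact ((hq₁ α).prodMass hp₁ hp₂ (hq₂ α)).comp_injective (Equiv.injective _)

lemma entFn_prodMass (hp₁ : IsProb p₁) (hp₂ : IsProb p₂) (X₁ : N → Ω₁ → A₁)
    (X₂ : N → Ω₂ → A₂) (α : Finset N) :
    entFn (prodMass p₁ p₂) (fun i => Prod.map (X₁ i) (X₂ i)) α = entFn p₁ X₁ α + entFn p₂ X₂ α := by
  rw [entFn, tupleOn_prodMap, entH_comp_injective (Equiv.injective _), entH_prodMass hp₁ hp₂]
  rfl

end Product

theorem sum_of_quasi_uniform_entropy_functions_general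
    {N : Type*}
    {Ω₁ Ω₂ A₁ A₂ : Type*} [Fintype Ω₁] [Fintype Ω₂]
    (p₁ : Ω₁ → ℝ) (X₁ : N → Ω₁ → A₁) (p₂ : Ω₂ → ℝ) (X₂ : N → Ω₂ → A₂)
    (hp₁ : IsProb p₁) (hp₂ : IsProb p₂)
    (hq₁ : QuasiUniformFamily p₁ X₁) (hq₂ : QuasiUniformFamily p₂ X₂) :
    ∃ (Ω : Type) (inst : Fintype Ω) (p : Ω → ℝ) (X : N → Ω → A₁ × A₂),
      @IsProb Ω inst p ∧ @QuasiUniformFamily Ω inst N (A₁ × A₂) p X ∧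
      ∀ α : Finset N,
        @entFn Ω inst N (A₁ × A₂) p X α = entFn p₁ X₁ α + entFn p₂ X₂ α := by
  let e := (Fintype.equivFin (Ω₁ × Ω₂)).symm
  refine ⟨_, inferInstance, prodMass p₁ p₂ ∘ e, fun i => Prod.map (X₁ i) (X₂ i) ∘ e,
    (hp₁.prod hp₂).comp_equiv e, (hq₁.prodMass hp₁ hp₂ hq₂).comp_equiv e, fun α => ?_⟩
  rw [entFn_comp_equiv, entFn_prodMass hp₁ hp₂]

theorem sum_of_quasi_uniform_entropy_functions
    {N : Type*} [Fintype N]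
    {Ω₁ Ω₂ A₁ A₂ : Type*} [Fintype Ω₁] [Fintype Ω₂]
    (p₁ : Ω₁ → ℝ) (X₁ : N → Ω₁ → A₁) (p₂ : Ω₂ → ℝ) (X₂ : N → Ω₂ → A₂)
    (hp₁ : IsProb p₁) (hp₂ : IsProb p₂)
    (hq₁ : QuasiUniformFamily p₁ X₁) (hq₂ : QuasiUniformFamily p₂ X₂) :
    ∃ (Ω : Type) (inst : Fintype Ω) (p : Ω → ℝ) (X : N → Ω → A₁ × A₂),
      @IsProb Ω inst p ∧ @QuasiUniformFamily Ω inst N (A₁ × A₂) p X ∧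
      ∀ α : Finset N,
        @entFn Ω inst N (A₁ × A₂) p X α = entFn p₁ X₁ α + entFn p₂ X₂ α :=
  sum_of_quasi_uniform_entropy_functions_general p₁ X₁ p₂ X₂ hp₁ hp₂ hq₁ hq₂
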